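/- Let μ be a non-degenerate stable probability measure on ℝ with characteristic function φ, and for each positive integer n let a_n > 0 and b_n ∈ ℝ satisfy φ(t)^n = φ(a_n t)·exp(i b_n t) for all real t. Then: (1) a_1 = 1 and a_n < a_{n+1} for all n ≥ 1; (2) a_{mn} = a_m · a_n for all positive integers m, n; (3) b_m (n − a_n) = b_n (m − a_m) for all positive integers m, n; and (4) φ(t) ≠ 0 for every real t. -/

import Mathlib

open MeasureTheory Complex Filter

/-- The characteristic function of a measure on ℝ. -/
noncomputable def charFun' (μ : Measure ℝ) (t : ℝ) : ℂ :=
  ∫ x, Complex.exp (Complex.I * t * x) ∂μ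

lemma absExpIrm (r s : ℝ) : ‖Complex.exp (Complex.I * r * s)‖ = 1 := by
  rw [Complex.norm_exp]
  simp [Complex.mul_re]

lemma charFun'_continuous (μ : Measure ℝ) [IsProbabilityMeasure μ] :
    Continuous (charFun' μ) := by
  apply continuous_of_dominated (bound := fun _ => (1:ℝ))
  · intro t
    exact ((Complex.continuous_exp.comp (by continuity)).aestronglyMeasurable)
  · intro t
    filter_upwards with x
    exact (absExpIrm t x).le
  · exact integrable_const 1
  · filter_upwards with x
    exact Complex.continuous_exp.comp (by continuity)

lemma charFun'_zero (μ : Measure ℝ) [IsProbabilityMeasure μ] : charFun' μ 0 = 1 := by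
  simp [charFun']

lemma charFun'_abs_le_one (μ : Measure ℝ) [IsProbabilityMeasure μ] (t : ℝ) :
    ‖charFun' μ t‖ ≤ 1 := by
  calc ‖charFun' μ t‖ ≤ 1 * (μ Set.univ).toReal := by
        apply norm_integral_le_of_norm_le_const
        filter_upwards with x
        exact (absExpIrm t x).le
    _ = 1 := by simp

lemma exp_lin_eq (α β : ℝ)
    (h : ∀ t : ℝ, Complex.exp (Complex.I * α * t) = Complex.exp (Complex.I * β * t)) :
    α = β := by
  by_contra hne
  have hd : α - β ≠ 0 := sub_ne_zero.mpr hne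
  set t : ℝ := Real.pi / (α - β) with ht
  have h1 : Complex.exp (Complex.I * α * t - Complex.I * β * t) = 1 := by
    rw [Complex.exp_sub, h t, div_self (Complex.exp_ne_zero _)]
  have h2 : Complex.I * α * t - Complex.I * β * t = Real.pi * Complex.I := by
    have : ((α - β) * t : ℝ) = Real.pi := by
      rw [ht]; field_simp
    push_cast [← this]
    ring
  rw [h2, Complex.exp_pi_mul_I] at h1
  norm_num at h1

theorem stmt13 (μ : Measure ℝ) [IsProbabilityMeasure μ]
    (hnd : ∃ t : ℝ, ‖charFun' μ t‖ < 1)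
    (a b : ℕ → ℝ) (ha : ∀ n : ℕ, 0 < n → 0 < a n)
    (hstable : ∀ n : ℕ, 0 < n → ∀ t : ℝ,
      (charFun' μ t) ^ n = charFun' μ (a n * t) * Complex.exp (Complex.I * (b n) * t)) :
    (a 1 = 1 ∧ ∀ n : ℕ, 1 ≤ n → a n < a (n + 1)) ∧
    (∀ m n : ℕ, 0 < m → 0 < n → a (m * n) = a m * a n) ∧
    (∀ m n : ℕ, 0 < m → 0 < n → b m * ((n : ℝ) - a n) = b n * ((m : ℝ) - a m)) ∧
    (∀ t : ℝ, charFun' μ t ≠ 0) := by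
  obtain ⟨t0, ht0⟩ := hnd
  set f : ℝ → ℝ := fun t => ‖charFun' μ t‖ with hfdef
  have hcont : Continuous f := continuous_norm.comp (charFun'_continuous μ)
  have hf0 : f 0 = 1 := by simp [hfdef, charFun'_zero]
  have hfnn : ∀ t, 0 ≤ f t := fun t => norm_nonneg _
  have hfle : ∀ t, f t ≤ 1 := fun t => charFun'_abs_le_one μ t
  have hfpow : ∀ n : ℕ, 0 < n → ∀ t, f t ^ n = f (a n * t) := by
    intro n hn t
    have h := congrArg (fun z : ℂ => ‖z‖) (hstable n hn t)
    simpa [hfdef, norm_pow, norm_mul, absExpIrm] using h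
  -- key lemma: contraction inequality is impossible
  have keyle : ∀ c : ℝ, 0 < c → c < 1 → (∀ s, f (c * s) ≤ f s) → False := by
    intro c hc0 hc1 hle
    have hiter : ∀ k : ℕ, f (c ^ k * t0) ≤ f t0 := by
      intro k
      induction k with
      | zero => simp
      | succ k ih =>
        have : f (c * (c ^ k * t0)) ≤ f (c ^ k * t0) := hle _
        calc f (c ^ (k+1) * t0) = f (c * (c ^ k * t0)) := by ring_nf
          _ ≤ f (c ^ k * t0) := hle _
          _ ≤ f t0 := ih
    have hlim : Tendsto (fun k : ℕ => f (c ^ k * t0)) atTop (nhds (f 0)) := by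
      have h1 : Tendsto (fun k : ℕ => c ^ k * t0) atTop (nhds 0) := by
        simpa using (tendsto_pow_atTop_nhds_zero_of_lt_one hc0.le hc1).mul_const t0
      exact (hcont.tendsto 0).comp h1
    rw [hf0] at hlim
    have h1 : (1:ℝ) ≤ f t0 := le_of_tendsto hlim (Eventually.of_forall hiter)
    linarith
  have key : ∀ c : ℝ, 0 < c → (∀ s, f (c * s) = f s) → c = 1 := by
    intro c hc0 heq
    by_contra hne
    rcases lt_or_gt_of_ne hne with h | h
    · exact keyle c hc0 h (fun s => (heq s).le)
    · refine keyle c⁻¹ (by positivity) (by rw [inv_lt_one_iff₀]; right; exact h) ?_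
      intro s
      have := heq (c⁻¹ * s)
      rw [show c * (c⁻¹ * s) = s by field_simp] at this
      exact this.symm.le
  -- a 1 = 1
  have ha1 : a 1 = 1 := by
    apply key (a 1) (ha 1 one_pos)
    intro s
    have := hfpow 1 one_pos s
    simpa using this.symm
  -- monotonicity
  have hmono : ∀ n : ℕ, 1 ≤ n → a n < a (n + 1) := by
    intro n hn
    by_contra hle'
    push_neg at hle'
    have hn0 : 0 < n := hn
    have han : 0 < a n := ha n hn0
    have han1 : 0 < a (n+1) := ha (n+1) (Nat.succ_pos n)
    rcases eq_or_lt_of_le hle' with heq | hlt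
    · -- a (n+1) = a n : f takes only values 0 and 1
      have hval : ∀ t, f t = 0 ∨ f t = 1 := by
        intro t
        have h1 : f t ^ n = f (a n * t) := hfpow n hn0 t
        have h2 : f t ^ (n+1) = f (a n * t) := by
          rw [← heq] at h1 ⊢
          exact hfpow (n+1) (Nat.succ_pos n) t
        have h3 : f t ^ n * (1 - f t) = 0 := by
          have : f t ^ (n+1) = f t ^ n * f t := by ring
          nlinarith [h1, h2]
        rcases mul_eq_zero.mp h3 with h | h
        · left
          exact pow_eq_zero_iff hn0.ne' |>.mp h
        · right; linarith
      -- IVT contradiction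
      have hy : (1 + f t0) / 2 ∈ Set.uIcc (f 0) (f t0) := by
        rw [hf0, Set.mem_uIcc]
        right
        constructor <;> [linarith [ht0]; linarith [ht0]]
      obtain ⟨s, _, hs⟩ := intermediate_value_uIcc (hcont.continuousOn) hy
      rcases hval s with h | h <;> rw [hs] at h <;> nlinarith [hfnn t0, ht0]
    · -- a (n+1) < a n
      apply keyle (a (n+1) / a n) (by positivity) (by rw [div_lt_one han]; exact hlt)
      intro s
      have e1 : f (a (n+1) / a n * s) = f (s / a n) ^ (n+1) := by
        rw [hfpow (n+1) (Nat.succ_pos n) (s / a n)]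
        ring_nf
      have e2 : f s = f (s / a n) ^ n := by
        rw [hfpow n hn0 (s / a n)]
        congr 1
        field_simp
      rw [e1, e2]
      apply pow_le_pow_of_le_one (hfnn _) (hfle _) (Nat.le_succ n)
  -- the two-way composition identity
  have comp : ∀ m n : ℕ, 0 < m → 0 < n → ∀ t : ℝ,
      charFun' μ t ^ (m * n) =
        charFun' μ (a n * a m * t) *
          Complex.exp (Complex.I * ((a m * b n + n * b m : ℝ) : ℂ) * t) := by
    intro m n hm hn t
    have h1 := hstable m hm t
    have h2 := hstable n hn (a m * t)
    calc charFun' μ t ^ (m * n) = (charFun' μ t ^ m) ^ n := by rw [pow_mul]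
      _ = (charFun' μ (a m * t) * Complex.exp (Complex.I * (b m) * t)) ^ n := by rw [h1]
      _ = charFun' μ (a m * t) ^ n * Complex.exp (Complex.I * (b m) * t) ^ n := mul_pow _ _ _
      _ = charFun' μ (a n * a m * t) *
            Complex.exp (Complex.I * ((a m * b n + n * b m : ℝ) : ℂ) * t) := by
          rw [h2, ← Complex.exp_nat_mul, mul_assoc, ← Complex.exp_add,
            mul_assoc (a n) (a m) t]
          congr 2
          push_cast
          ring
  -- product rule
  have hprod : ∀ m n : ℕ, 0 < m → 0 < n → a (m * n) = a m * a n := by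
    intro m n hm hn
    have hmn : 0 < m * n := Nat.mul_pos hm hn
    have hamn : 0 < a (m * n) := ha _ hmn
    have ham : 0 < a m := ha m hm
    have han : 0 < a n := ha n hn
    have habs : ∀ t, f (a (m * n) * t) = f (a n * a m * t) := by
      intro t
      have e1 : f t ^ (m * n) = f (a (m * n) * t) := hfpow _ hmn t
      have e2 := congrArg (fun z : ℂ => ‖z‖) (comp m n hm hn t)
      simp only [norm_pow, norm_mul, absExpIrm, mul_one] at e2
      rw [← e1, e2]
    have hc : a n * a m / a (m * n) = 1 := by
      apply key _ (by positivity)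
      intro s
      have := habs (s / a (m * n))
      rw [show a (m * n) * (s / a (m * n)) = s by field_simp,
        show a n * a m * (s / a (m * n)) = a n * a m / a (m * n) * s by ring] at this
      exact this.symm
    field_simp at hc
    rw [← hc]; ring
  -- a 2 ^ k grows
  have ha2 : 1 < a 2 := by
    have := hmono 1 le_rfl
    rwa [ha1] at this
  have hapow : ∀ k : ℕ, a (2 ^ k) = a 2 ^ k := by
    intro k
    induction k with
    | zero => simpa using ha1
    | succ k ih =>
      rw [pow_succ, pow_succ, ← ih, ← hprod (2 ^ k) 2 (pow_pos two_pos k) two_pos]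
  -- nonvanishing
  have hne : ∀ t : ℝ, charFun' μ t ≠ 0 := by
    have hopen : IsOpen (f ⁻¹' Set.Ioi (1/2 : ℝ)) := isOpen_Ioi.preimage hcont
    have h0mem : (0:ℝ) ∈ f ⁻¹' Set.Ioi (1/2 : ℝ) := by
      simp [hf0]; norm_num
    obtain ⟨δ, hδ0, hδ⟩ := Metric.isOpen_iff.mp hopen 0 h0mem
    intro t
    obtain ⟨k, hk⟩ := pow_unbounded_of_one_lt (|t| / δ + 1) ha2
    have hak : 0 < a (2 ^ k) := ha _ (pow_pos two_pos k)
    have hsmall : f (t / a (2 ^ k)) > 1/2 := by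
      apply hδ
      rw [Metric.mem_ball, Real.dist_eq, sub_zero, abs_div, abs_of_pos hak]
      rw [div_lt_iff₀ hak]
      have h1 : |t| / δ + 1 ≤ a (2 ^ k) := by
        rw [hapow]; linarith [hk.le]
      have h2 : |t| / δ < a (2 ^ k) := by linarith [div_nonneg (abs_nonneg t) hδ0.le]
      calc |t| = |t| / δ * δ := by field_simp
        _ < a (2 ^ k) * δ := by exact mul_lt_mul_of_pos_right h2 hδ0
        _ = δ * a (2 ^ k) := mul_comm _ _
    have hpos : 0 < f t := by
      have := hfpow (2 ^ k) (pow_pos two_pos k) (t / a (2 ^ k))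
      rw [show a (2 ^ k) * (t / a (2 ^ k)) = t by field_simp] at this
      rw [← this]
      positivity
    intro h
    rw [hfdef] at hpos
    simp only [h, norm_zero] at hpos
    exact lt_irrefl 0 hpos
  -- shift relation
  have hb : ∀ m n : ℕ, 0 < m → 0 < n → b m * ((n : ℝ) - a n) = b n * ((m : ℝ) - a m) := by
    intro m n hm hn
    have heq : ∀ t : ℝ, Complex.exp (Complex.I * ((a m * b n + n * b m : ℝ) : ℂ) * t)
        = Complex.exp (Complex.I * ((a n * b m + m * b n : ℝ) : ℂ) * t) := by
      intro t
      have h1 := comp m n hm hn t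
      have h2 := comp n m hn hm t
      rw [Nat.mul_comm n m] at h2
      rw [h1, show a m * a n = a n * a m from mul_comm _ _] at h2
      exact mul_left_cancel₀ (hne _) h2
    have := exp_lin_eq _ _ heq
    linear_combination this
  exact ⟨⟨ha1, hmono⟩, hprod, hb, hne⟩
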